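/- Let L: R^d → R be convex and twice differentiable, λ > 0, and β̂ a minimizer of L(β) + λ‖β‖_1. Let β* have support S with |S| ≤ s. Suppose ‖∇L(β*)‖_∞ ≤ λ/2 and suppose the restricted strong convexity bound (β̂ − β*)^T ∇²L(ξ)(β̂ − β*) ≥ (c κ/(2s))·‖β̂_S − β*_S‖_1² holds along the segment between β* and β̂ for some constant c ∈ (0,1]. Then ‖β̂ − β*‖_1 ≤ 48 s λ/(c κ). -/

import Mathlib

/-!
Write `Δ = β̂ - β*`, `a = ‖Δ_S‖₁`, `b = ‖Δ_{Sᶜ}‖₁`. Since `β*` vanishes off `S`, minimality of `β̂`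
gives the basic inequality `L β̂ - L β* ≤ λ (a - b)`. A second-order Taylor bound along the segment
`[β*, β̂]`, with the restricted strong convexity bounding the Hessian term from below and the
`ℓ∞` bound on `∇L(β*)` controlling the linear term by `λ (a + b) / 2`, turns this into
`(cκ / (2s)) a² ≤ λ (3a - b)`. Hence `b ≤ 3a` (the cone condition) and `a ≤ 6sλ / (cκ)`,
so `‖Δ‖₁ = a + b ≤ 4a ≤ 24sλ / (cκ)`.
-/

open Set Finset

theorem add_add_half_le_of_le_deriv_deriv {g g' g'' : ℝ → ℝ} {m : ℝ}
    (hg : ∀ t, HasDerivAt g (g' t) t) (hg' : ∀ t, HasDerivAt g' (g'' t) t)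
    (hm : ∀ t ∈ Icc (0 : ℝ) 1, m ≤ g'' t) :
    g 0 + g' 0 + m / 2 ≤ g 1 := by
  have hslope : ∀ t ∈ Icc (0 : ℝ) 1, g' 0 + m * t ≤ g' t := by
    intro t ht
    have h := (convex_Icc (0 : ℝ) 1).mul_sub_le_image_sub_of_le_deriv
      (fun t _ => (hg' t).continuousAt.continuousWithinAt)
      (fun t _ => (hg' t).differentiableAt.differentiableWithinAt)
      (fun t ht => (hg' t).deriv ▸ hm t (interior_subset ht))
      0 (left_mem_Icc.2 zero_le_one) t ht ht.1
    linarith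
  let k t := g t - g' 0 * t - m / 2 * t ^ 2
  have hk : ∀ t, HasDerivAt k (g' t - g' 0 - m * t) t := fun t =>
    (((hg t).sub ((hasDerivAt_id t).const_mul (g' 0))).sub
      ((hasDerivAt_pow 2 t).const_mul (m / 2))).congr_deriv (by push_cast; ring)
  have h := (convex_Icc (0 : ℝ) 1).mul_sub_le_image_sub_of_le_deriv (C := 0)
    (fun t _ => (hk t).continuousAt.continuousWithinAt)
    (fun t _ => (hk t).differentiableAt.differentiableWithinAt)
    (fun t ht => (hk t).deriv ▸ by linarith [hslope t (interior_subset ht)])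
    0 (left_mem_Icc.2 zero_le_one) 1 (right_mem_Icc.2 zero_le_one) zero_le_one
  simp only [k] at h
  linarith

theorem ContDiff.add_fderiv_add_half_le {E : Type*} [NormedAddCommGroup E] [NormedSpace ℝ E]
    {f : E → ℝ} (hf : ContDiff ℝ 2 f) {x y : E} {m : ℝ}
    (hm : ∀ ξ ∈ segment ℝ x y, m ≤ fderiv ℝ (fderiv ℝ f) ξ (y - x) (y - x)) :
    f x + fderiv ℝ f x (y - x) + m / 2 ≤ f y := by
  let φ (t : ℝ) : E := x + t • (y - x)
  have hφ t : HasDerivAt φ (y - x) t :=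
    (((hasDerivAt_id t).smul_const (y - x)).const_add x).congr_deriv (one_smul ℝ _)
  have hf' : Differentiable ℝ (fderiv ℝ f) :=
    (hf.fderiv_right (m := 1) (by norm_num)).differentiable one_ne_zero
  have key := add_add_half_le_of_le_deriv_deriv (g := f ∘ φ) (m := m)
    (fun t => ((hf.differentiable two_ne_zero) (φ t)).hasFDerivAt.comp_hasDerivAt t (hφ t))
    (fun t => by
      simpa using ((hf' (φ t)).hasFDerivAt.comp_hasDerivAt t (hφ t)).clm_apply
        (hasDerivAt_const t (y - x)))
    (fun t ht => hm (φ t) (segment_eq_image' ℝ x y ▸ mem_image_of_mem _ ht))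
  simpa [φ] using key

theorem abs_apply_le_mul_sum_abs {ι : Type*} [Fintype ι] [DecidableEq ι]
    (ℓ : (ι → ℝ) →L[ℝ] ℝ) {C : ℝ} (hℓ : ∀ i, |ℓ (Pi.single i 1)| ≤ C) (v : ι → ℝ) :
    |ℓ v| ≤ C * ∑ i, |v i| := by
  calc |ℓ v| = |∑ i, v i * ℓ (Pi.single i 1)| := by
        conv_lhs => rw [pi_eq_sum_univ' v]
        simp [map_sum]
    _ ≤ ∑ i, |v i| * C := by
        refine (abs_sum_le_sum_abs _ _).trans (sum_le_sum fun i _ => ?_)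
        rw [abs_mul]
        exact mul_le_mul_of_nonneg_left (hℓ i) (abs_nonneg _)
    _ = C * ∑ i, |v i| := by rw [← sum_mul, mul_comm]

theorem sum_abs_sub_sum_abs_le_of_forall_notMem_eq_zero {ι : Type*} [Fintype ι] [DecidableEq ι]
    {S : Finset ι} {x : ι → ℝ} (hx : ∀ j ∉ S, x j = 0) (y : ι → ℝ) :
    ∑ i, |x i| - ∑ i, |y i| ≤ ∑ i ∈ S, |y i - x i| - ∑ i ∈ Sᶜ, |y i - x i| := by
  calc ∑ i, |x i| - ∑ i, |y i|
        = ∑ i ∈ S, (|x i| - |y i|) + ∑ i ∈ Sᶜ, (|x i| - |y i|) := by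
          rw [sum_add_sum_compl, sum_sub_distrib]
    _ ≤ ∑ i ∈ S, |y i - x i| + ∑ i ∈ Sᶜ, -|y i - x i| := by
          gcongr with i _ i hi
          · rw [abs_sub_comm]
            exact abs_sub_abs_le_abs_sub _ _
          · rw [hx i (mem_compl.mp hi), abs_zero, sub_zero, zero_sub]
    _ = ∑ i ∈ S, |y i - x i| - ∑ i ∈ Sᶜ, |y i - x i| := by
          rw [sum_neg_distrib, sub_eq_add_neg]

theorem add_le_of_mul_sq_le_mul_sub {K lam a b : ℝ} (hK : 0 < K) (hlam : 0 < lam) (ha : 0 ≤ a)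
    (hb : 0 ≤ b) (h : K * a ^ 2 ≤ lam * (3 * a - b)) :
    a + b ≤ 12 * lam / K := by
  have hcone : b ≤ 3 * a := by nlinarith [mul_nonneg hK.le (sq_nonneg a)]
  have hKa : K * a ≤ 3 * lam := by
    rcases ha.eq_or_lt with rfl | hpos
    · linarith
    · exact le_of_mul_le_mul_right (by nlinarith [mul_nonneg hlam.le hb]) hpos
  rw [le_div_iff₀ hK]
  nlinarith [mul_le_mul_of_nonneg_left hcone hK.le]

theorem stmt_11_general (d s : ℕ) (hs : 1 ≤ s) (L : (Fin d → ℝ) → ℝ) (lam c κ : ℝ)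
    (hlam : 0 < lam) (hκ : 0 < κ) (hc : c ∈ Set.Ioc (0 : ℝ) 1)
    (hC2 : ContDiff ℝ 2 L)
    (βhat βstar : Fin d → ℝ) (S : Finset (Fin d))
    (hsupp : ∀ j ∉ S, βstar j = 0)
    (hmin : ∀ β : Fin d → ℝ,
      L βhat + lam * ∑ i, |βhat i| ≤ L β + lam * ∑ i, |β i|)
    (hgrad : ∀ i, |fderiv ℝ L βstar (Pi.single i 1)| ≤ lam / 2)
    (hRSC : ∀ ξ ∈ segment ℝ βstar βhat,
      (c * κ / (2 * s)) * (∑ i ∈ S, |βhat i - βstar i|) ^ 2 ≤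
        fderiv ℝ (fderiv ℝ L) ξ (βhat - βstar) (βhat - βstar)) :
    ∑ i, |βhat i - βstar i| ≤ 48 * s * lam / (c * κ) := by
  set a := ∑ i ∈ S, |βhat i - βstar i|
  set b := ∑ i ∈ Sᶜ, |βhat i - βstar i|
  have hs0 : (0 : ℝ) < s := by exact_mod_cast hs
  have hcκ : 0 < c * κ := mul_pos hc.1 hκ
  have hbasic : L βhat - L βstar ≤ lam * (a - b) := by
    have := mul_le_mul_of_nonneg_left
      (sum_abs_sub_sum_abs_le_of_forall_notMem_eq_zero hsupp βhat) hlam.le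
    linarith [hmin βstar]
  have hgradΔ := abs_apply_le_mul_sum_abs (fderiv ℝ L βstar) hgrad (βhat - βstar)
  simp only [Pi.sub_apply, ← sum_add_sum_compl S] at hgradΔ
  have htaylor := hC2.add_fderiv_add_half_le hRSC
  have hkey : c * κ / (2 * s) * a ^ 2 ≤ lam * (3 * a - b) := by
    linarith [neg_abs_le (fderiv ℝ L βstar (βhat - βstar))]
  calc ∑ i, |βhat i - βstar i| = a + b := (sum_add_sum_compl S _).symm
    _ ≤ 12 * lam / (c * κ / (2 * s)) :=
        add_le_of_mul_sq_le_mul_sub (by positivity) hlam (sum_nonneg fun _ _ => abs_nonneg _)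
          (sum_nonneg fun _ _ => abs_nonneg _) hkey
    _ = 24 * s * lam / (c * κ) := by field_simp; ring
    _ ≤ 48 * s * lam / (c * κ) := by gcongr; norm_num

/-- Deterministic ℓ₁ error bound for the Lasso: if `β̂` minimizes `L(β) + lam ‖β‖₁` for a
convex twice-differentiable `L`, `β*` is supported on `S` with `|S| ≤ s`,
`‖∇L(β*)‖_∞ ≤ lam/2`, and restricted strong convexity
`Δᵀ ∇²L(ξ) Δ ≥ (cκ/(2s)) ‖Δ_S‖₁²` (with `Δ = β̂ − β*`) holds along the segment between
`β*` and `β̂`, then `‖β̂ − β*‖₁ ≤ 48 s lam / (c κ)`. -/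
theorem stmt_11 (d s : ℕ) (hs : 1 ≤ s) (L : (Fin d → ℝ) → ℝ) (lam c κ : ℝ)
    (hlam : 0 < lam) (hκ : 0 < κ) (hc : c ∈ Set.Ioc (0 : ℝ) 1)
    (hconv : ConvexOn ℝ Set.univ L) (hC2 : ContDiff ℝ 2 L)
    (βhat βstar : Fin d → ℝ) (S : Finset (Fin d)) (hS : S.card ≤ s)
    (hsupp : ∀ j ∉ S, βstar j = 0)
    (hmin : ∀ β : Fin d → ℝ,
      L βhat + lam * ∑ i, |βhat i| ≤ L β + lam * ∑ i, |β i|)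
    (hgrad : ∀ i, |fderiv ℝ L βstar (Pi.single i 1)| ≤ lam / 2)
    (hRSC : ∀ ξ ∈ segment ℝ βstar βhat,
      (c * κ / (2 * s)) * (∑ i ∈ S, |βhat i - βstar i|) ^ 2 ≤
        fderiv ℝ (fderiv ℝ L) ξ (βhat - βstar) (βhat - βstar)) :
    ∑ i, |βhat i - βstar i| ≤ 48 * s * lam / (c * κ) :=
  stmt_11_general d s hs L lam c κ hlam hκ hc hC2 βhat βstar S hsupp hmin hgrad hRSC
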